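/- arXiv:2407.01776 — 3 statements merged into one kernel-verified Lean document; each statement's English description precedes it below -/
import Mathlib

section
/- Fix κ ≥ 0 and define for λ ∈ ℝ the function p_λ : ℝ → ℝ by p_λ(x) = (x − κ·sign(x)) / (1 + λ) if x ≤ 1/2 and p_λ(x) = (x − κ·sign(x−1) + λ) / (1 + λ) otherwise. Let λ : ℕ → ℝ be a monotonically increasing sequence with λ(t) → ∞. Then for every x ∈ ℝ, the distance from p_{λ(t)}(x) to the set {0, 1} ⊆ ℝ converges to 0 as t → ∞. -/
open Filter

/-- The closed form of the Boolean proximal operator of the ELB regularizer. -/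
noncomputable def boolProx (κ lam x : ℝ) : ℝ :=
  if x ≤ 1 / 2 then (x - κ * Real.sign x) / (1 + lam)
  else (x - κ * Real.sign (x - 1) + lam) / (1 + lam)

/-- As the regularization rate `λ t` increases monotonically to infinity, the Boolean
proximal operator maps every real `x` to a point whose distance to `{0, 1}` vanishes. -/
theorem boolProx_dist_to_boolean_tendsto_zero
    (κ : ℝ) (hκ : 0 ≤ κ)
    (lam : ℕ → ℝ) (hmono : Monotone lam) (hlim : Tendsto lam atTop atTop)
    (x : ℝ) :
    Tendsto (fun t => Metric.infDist (boolProx κ (lam t) x) ({0, 1} : Set ℝ))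
      atTop (nhds 0) := by
  have hdenom : Tendsto (fun t => 1 + lam t) atTop atTop :=
    tendsto_atTop_add_const_left _ 1 hlim
  have hinv : Tendsto (fun t => (1 + lam t)⁻¹) atTop (nhds 0) :=
    hdenom.inv_tendsto_atTop
  have key : ∃ c ∈ ({0, 1} : Set ℝ),
      Tendsto (fun t => boolProx κ (lam t) x) atTop (nhds c) := by
    by_cases hx : x ≤ 1 / 2
    · refine ⟨0, Or.inl rfl, ?_⟩
      have : Tendsto (fun t => (x - κ * Real.sign x) * (1 + lam t)⁻¹) atTop
          (nhds ((x - κ * Real.sign x) * 0)) := hinv.const_mul _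
      simp only [mul_zero] at this
      refine this.congr (fun t => ?_)
      rw [boolProx, if_pos hx, div_eq_mul_inv]
    · refine ⟨1, Or.inr rfl, ?_⟩
      have h1 : Tendsto (fun t => (x - κ * Real.sign (x - 1) - 1) * (1 + lam t)⁻¹ + 1)
          atTop (nhds ((x - κ * Real.sign (x - 1) - 1) * 0 + 1)) :=
        (hinv.const_mul _).add_const 1
      simp only [mul_zero, zero_add] at h1
      have hev : ∀ᶠ t in atTop, (x - κ * Real.sign (x - 1) - 1) * (1 + lam t)⁻¹ + 1
          = boolProx κ (lam t) x := by
        filter_upwards [hdenom.eventually_gt_atTop 0] with t ht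
        have hne : (1 + lam t) ≠ 0 := ne_of_gt ht
        simp only [boolProx, hx, if_false]
        field_simp
        ring
      exact (Tendsto.congr' hev h1)
  obtain ⟨c, hc, htend⟩ := key
  have hcont : Tendsto (fun t => Metric.infDist (boolProx κ (lam t) x) ({0, 1} : Set ℝ))
      atTop (nhds (Metric.infDist c ({0, 1} : Set ℝ))) :=
    ((Metric.continuous_infDist_pt _).continuousAt.tendsto.comp htend)
  rwa [Metric.infDist_zero_of_mem hc] at hcont
end

section
/- Let κ ≥ 0, λ ≥ 0, and 0 ≤ x ≤ 1/2. Then inf_{y ∈ ℝ} [(1/2)(y − x)² + κ|y| + λy²] ≤ inf_{y ∈ ℝ} [(1/2)(y − x)² + κ|y − 1| + λ(y − 1)²]. -/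
/-- For proximal centers `0 ≤ x ≤ 1/2`, the elastic-net branch centered at `0`
achieves a smaller minimal objective value than the branch centered at `1`. -/
theorem elasticNet_branch_envelope_le
    (x κ lam : ℝ) (hκ : 0 ≤ κ) (hlam : 0 ≤ lam) (hx0 : 0 ≤ x) (hx : x ≤ 1 / 2) :
    (⨅ y : ℝ, 1 / 2 * (y - x) ^ 2 + κ * |y| + lam * y ^ 2) ≤
      ⨅ y : ℝ, 1 / 2 * (y - x) ^ 2 + κ * |y - 1| + lam * (y - 1) ^ 2 := by
  have hbdd : BddBelow (Set.range fun y : ℝ => 1 / 2 * (y - x) ^ 2 + κ * |y| + lam * y ^ 2) := by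
    refine ⟨0, ?_⟩
    rintro _ ⟨y, rfl⟩
    positivity
  refine le_ciInf fun y => ?_
  by_cases hy : y ≤ 1 / 2
  · refine le_trans (ciInf_le hbdd y) ?_
    have h1 : |y| ≤ |y - 1| := by
      rcases abs_cases y with ⟨h, _⟩ | ⟨h, _⟩ <;> rcases abs_cases (y - 1) with ⟨h', _⟩ | ⟨h', _⟩ <;>
        linarith
    have h2 : y ^ 2 ≤ (y - 1) ^ 2 := by nlinarith
    nlinarith [mul_le_mul_of_nonneg_left h1 hκ, mul_le_mul_of_nonneg_left h2 hlam]
  · refine le_trans (ciInf_le hbdd (1 - y)) ?_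
    push_neg at hy
    have h1 : |1 - y| = |y - 1| := abs_sub_comm _ _
    have h3 : (1 - y - x) ^ 2 ≤ (y - x) ^ 2 := by nlinarith
    rw [h1]
    nlinarith
end

section
/- Let E be a real inner product space, f : E → ℝ a function, f' : E → E a gradient field such that f has gradient f'(u) at every u ∈ E, and suppose f' is Lipschitz with constant L ≥ 0. Let g : E → ℝ, let η > 0, let x ∈ E, and suppose y ∈ E is a global minimizer of the function u ↦ (1/(2η))‖u − (x − η • f'(x))‖² + g(u). Then f(y) + g(y) ≤ f(x) + g(x) − (1/(2η) − L/2)·‖y − x‖². -/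
open intervalIntegral in
/-- Descent lemma. -/
lemma descent_lemma
    {E : Type*} [NormedAddCommGroup E] [InnerProductSpace ℝ E]
    (f : E → ℝ) (f' : E → E) (L : ℝ) (hL : 0 ≤ L)
    (hgrad : ∀ u : E, HasFDerivAt f (innerSL ℝ (f' u)) u)
    (hlip : ∀ u v : E, ‖f' u - f' v‖ ≤ L * ‖u - v‖) (x y : E) :
    f y ≤ f x + inner ℝ (f' x) (y - x) + L / 2 * ‖y - x‖ ^ 2 := by
  have hflip : LipschitzWith (Real.toNNReal L) f' := by
    apply LipschitzWith.of_dist_le_mul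
    intro u v
    simpa [dist_eq_norm, Real.coe_toNNReal L hL] using hlip u v
  set c : ℝ → E := fun t => x + t • (y - x) with hc
  have hline : ∀ t : ℝ, HasDerivAt c (y - x) t := by
    intro t
    simpa [hc] using ((hasDerivAt_id t).smul_const (y - x)).const_add x
  have hphi : ∀ t : ℝ, HasDerivAt (fun t => f (c t))
      (inner ℝ (f' (c t)) (y - x)) t := by
    intro t
    exact (hgrad (c t)).comp_hasDerivAt t (hline t)
  have hcont : Continuous fun t : ℝ => (inner ℝ (f' (c t)) (y - x) : ℝ) := by
    apply Continuous.inner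
    · exact hflip.continuous.comp (by continuity)
    · exact continuous_const
  have hint : f (c 1) - f (c 0) = ∫ t in (0:ℝ)..1, inner ℝ (f' (c t)) (y - x) := by
    rw [intervalIntegral.integral_eq_sub_of_hasDerivAt (fun t _ => hphi t)
      (hcont.intervalIntegrable 0 1)]
  have hc0 : c 0 = x := by simp [hc]
  have hc1 : c 1 = y := by simp [hc]
  have hbound : ∀ t ∈ Set.Icc (0:ℝ) 1,
      (inner ℝ (f' (c t)) (y - x) : ℝ) ≤ inner ℝ (f' x) (y - x) + L * ‖y - x‖ ^ 2 * t := by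
    intro t ht
    have h1 : (inner ℝ (f' (c t)) (y - x) : ℝ) - inner ℝ (f' x) (y - x)
        = inner ℝ (f' (c t) - f' x) (y - x) := by rw [inner_sub_left]
    have h2 : (inner ℝ (f' (c t) - f' x) (y - x) : ℝ) ≤ ‖f' (c t) - f' x‖ * ‖y - x‖ :=
      real_inner_le_norm _ _
    have h3 : ‖f' (c t) - f' x‖ ≤ L * (t * ‖y - x‖) := by
      have := hlip (c t) x
      simpa [hc, norm_smul, abs_of_nonneg ht.1] using this
    nlinarith [norm_nonneg (y - x), mul_le_mul_of_nonneg_right h3 (norm_nonneg (y - x))]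
  have hintle : (∫ t in (0:ℝ)..1, (inner ℝ (f' (c t)) (y - x) : ℝ)) ≤
      ∫ t in (0:ℝ)..1, (inner ℝ (f' x) (y - x) + L * ‖y - x‖ ^ 2 * t) := by
    apply intervalIntegral.integral_mono_on (by norm_num)
      (hcont.intervalIntegrable 0 1)
      ((by continuity : Continuous fun t : ℝ =>
        (inner ℝ (f' x) (y - x) + L * ‖y - x‖ ^ 2 * t : ℝ)).intervalIntegrable 0 1)
      hbound
  have hval : (∫ t in (0:ℝ)..1, (inner ℝ (f' x) (y - x) + L * ‖y - x‖ ^ 2 * t : ℝ))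
      = inner ℝ (f' x) (y - x) + L / 2 * ‖y - x‖ ^ 2 := by
    rw [intervalIntegral.integral_add (intervalIntegrable_const)
      (intervalIntegrable_id.const_mul _),
      intervalIntegral.integral_const, intervalIntegral.integral_const_mul,
      integral_id]
    norm_num
    ring
  rw [hc0, hc1] at hint
  linarith [hint ▸ hintle, hval ▸ hintle]

/-- Sufficient decrease of one proximal-gradient step: if `f` has gradient field `f'`
(`L`-Lipschitz), and `y` is a global minimizer of
`u ↦ (1/(2η))‖u − (x − η • f' x)‖² + g u`, then the composite objective `f + g`
decreases by at least `(1/(2η) − L/2)‖y − x‖²`. -/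
theorem proximal_gradient_sufficient_decrease
    {E : Type*} [NormedAddCommGroup E] [InnerProductSpace ℝ E]
    (f : E → ℝ) (f' : E → E) (g : E → ℝ) (L : ℝ) (hL : 0 ≤ L)
    (hgrad : ∀ u : E, HasFDerivAt f (innerSL ℝ (f' u)) u)
    (hlip : ∀ u v : E, ‖f' u - f' v‖ ≤ L * ‖u - v‖)
    (η : ℝ) (hη : 0 < η) (x y : E)
    (hy : ∀ u : E,
      1 / (2 * η) * ‖y - (x - η • f' x)‖ ^ 2 + g y ≤
        1 / (2 * η) * ‖u - (x - η • f' x)‖ ^ 2 + g u) :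
    f y + g y ≤ f x + g x - (1 / (2 * η) - L / 2) * ‖y - x‖ ^ 2 := by
  have hdesc := descent_lemma f f' L hL hgrad hlip x y
  have hx := hy x
  have e1 : ‖y - (x - η • f' x)‖ ^ 2 =
      ‖y - x‖ ^ 2 + 2 * η * inner ℝ (f' x) (y - x) + η ^ 2 * ‖f' x‖ ^ 2 := by
    have : y - (x - η • f' x) = (y - x) + η • f' x := by abel
    rw [this, norm_add_sq_real]
    rw [real_inner_smul_right, norm_smul, Real.norm_eq_abs, abs_of_pos hη,
      real_inner_comm]
    ring
  have e2 : ‖x - (x - η • f' x)‖ ^ 2 = η ^ 2 * ‖f' x‖ ^ 2 := by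
    have : x - (x - η • f' x) = η • f' x := by abel
    rw [this, norm_smul, Real.norm_eq_abs, abs_of_pos hη, mul_pow]
  rw [e1, e2] at hx
  have hη' : (2 * η) ≠ 0 := by positivity
  have h1 : 1 / (2 * η) * (2 * η * inner ℝ (f' x) (y - x)) = inner ℝ (f' x) (y - x) := by
    field_simp
  rw [mul_add, mul_add, h1] at hx
  have h2 : (1 / (2 * η) - L / 2) * ‖y - x‖ ^ 2
      = 1 / (2 * η) * ‖y - x‖ ^ 2 - L / 2 * ‖y - x‖ ^ 2 := by ring
  linarith
end
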